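/- The set {c_m(i') : i' ∈ H^m, r+1 ≤ wt(i') ≤ m} is a basis of the Berman code Ber_n^{r}(m), for m ≥ 1 and 0 ≤ r ≤ m−1. -/
import Mathlib


open scoped BigOperators

/-- The `l`-th block (of length `n^m`) of a vector of length `n^(m+1)`,
where the first coordinate of the index tuple selects the block. -/
def blockAt (n m : ℕ) (l : Fin n) (v : (Fin (m + 1) → Fin n) → ZMod 2) :
    (Fin m → Fin n) → ZMod 2 :=
  fun j => v (Fin.cons l j)

/-- Berman code `Ber_n^r(m) ⊆ F_2^{n^m}`, coordinates indexed by `H^m` with `H = Fin n`.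
`Ber_n^m(m) = {0}`, `Ber_n^0(m)` is the single parity-check code, and for `1 ≤ r`,
a codeword is a concatenation `(v_0|…|v_{n-1})` with each block in `Ber_n^{r-1}(m-1)`
and the sum of the blocks in `Ber_n^r(m-1)`. -/
def Ber (n : ℕ) : ℕ → (m : ℕ) → Set ((Fin m → Fin n) → ZMod 2)
  | _, 0 => {0}
  | 0, (m + 1) => {c | ∑ i, c i = 0}
  | (r + 1), (m + 1) =>
      {v | (∀ l : Fin n, blockAt n m l v ∈ Ber n r m) ∧
        (fun j => ∑ l : Fin n, v (Fin.cons l j)) ∈ Ber n (r + 1) m}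

/-- Dual Berman code `B_n^r(m) ⊆ F_2^{n^m}`.
`B_n^m(m)` is the full space, `B_n^0(m)` is the repetition code, and for `1 ≤ r`,
a codeword is `(u+u_0|…|u+u_{n-2}|u)` with each `u_l ∈ B_n^{r-1}(m-1)` and `u ∈ B_n^r(m-1)`. -/
def DBer (n : ℕ) : ℕ → (m : ℕ) → Set ((Fin m → Fin n) → ZMod 2)
  | _, 0 => Set.univ
  | 0, (m + 1) => {c | ∃ a : ZMod 2, c = fun _ => a}
  | (r + 1), (m + 1) =>
      {v | ∃ u ∈ DBer n (r + 1) m, ∃ w : Fin n → ((Fin m → Fin n) → ZMod 2),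
        (∀ l, w l ∈ DBer n r m) ∧
        (∀ l : Fin n, blockAt n m l v = if l.val = n - 1 then u else u + w l)}

/-- Star product of two codes: the span of all coordinatewise products. -/
def starProd {ι : Type*} (C D : Set (ι → ZMod 2)) : Submodule (ZMod 2) (ι → ZMod 2) :=
  Submodule.span (ZMod 2) {x | ∃ c ∈ C, ∃ d ∈ D, x = c * d}

/-- Dual code w.r.t. the standard bilinear form. -/
def dualCode {ι : Type*} [Fintype ι] (C : Set (ι → ZMod 2)) : Set (ι → ZMod 2) :=
  {x | ∀ c ∈ C, ∑ i, x i * c i = 0}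

/-- Partial order on tuples: `j ⪯ i` iff `supp(j) ⊆ supp(i)` and `j` agrees with `i` on
`supp(j)`. -/
def preceq {n m : ℕ} (j i : Fin m → Fin n) : Prop :=
  ∀ s, (j s).val ≠ 0 → j s = i s

instance {n m : ℕ} (j i : Fin m → Fin n) : Decidable (preceq j i) := by
  unfold preceq; infer_instance

/-- Hamming weight of a tuple in `H^m`: the number of nonzero entries. -/
def tupleWt {n m : ℕ} (j : Fin m → Fin n) : ℕ :=
  (Finset.univ.filter fun s => (j s).val ≠ 0).card

/-- The vector `c_m(i')`, the indicator of `{i : i ⪯ i'}`. -/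
def cm {n m : ℕ} (i' : Fin m → Fin n) : (Fin m → Fin n) → ZMod 2 :=
  fun i => if preceq i i' then 1 else 0

/-- The vector `d_m(i')`, the indicator of `{i : i ⪰ i'}`. -/
def dm {n m : ℕ} (i' : Fin m → Fin n) : (Fin m → Fin n) → ZMod 2 :=
  fun i => if preceq i' i then 1 else 0

/-- Standard basis vector of `F_2^{n^m}` at coordinate `v`. -/
def eVec {n m : ℕ} (v : Fin m → Fin n) : (Fin m → Fin n) → ZMod 2 :=
  fun i => if i = v then 1 else 0

section Lemmas
variable {n m : ℕ}

lemma preceq_refl (i : Fin m → Fin n) : preceq i i := fun _ _ => rfl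

lemma cm_self (i : Fin m → Fin n) : cm i i = 1 := if_pos (preceq_refl i)

lemma supp_subset_of_preceq {j i : Fin m → Fin n} (h : preceq j i) :
    (Finset.univ.filter fun s => (j s).val ≠ 0) ⊆ (Finset.univ.filter fun s => (i s).val ≠ 0) := by
  intro s hs
  simp only [Finset.mem_filter, Finset.mem_univ, true_and] at hs ⊢
  rw [← h s hs]; exact hs

lemma tupleWt_le_of_preceq {j i : Fin m → Fin n} (h : preceq j i) : tupleWt j ≤ tupleWt i :=
  Finset.card_le_card (supp_subset_of_preceq h)

lemma eq_of_preceq_of_wt_le {j i : Fin m → Fin n} (h : preceq j i)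
    (hw : tupleWt i ≤ tupleWt j) : j = i := by
  have hsupp := Finset.eq_of_subset_of_card_le (supp_subset_of_preceq h) hw
  funext s
  by_cases hs : (j s).val ≠ 0
  · exact h s hs
  · push_neg at hs
    have : s ∉ (Finset.univ.filter fun t => (i t).val ≠ 0) := by
      rw [← hsupp]; simp [hs]
    simp only [Finset.mem_filter, Finset.mem_univ, true_and, not_not] at this
    exact Fin.ext (by rw [hs, this])

lemma cm_linearIndependent : LinearIndependent (ZMod 2) (cm (n := n) (m := m)) := by
  rw [Fintype.linearIndependent_iff]
  intro g hg
  by_contra hne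
  push_neg at hne
  obtain ⟨i0, hi0⟩ := hne
  have hS : (Finset.univ.filter fun i => g i ≠ 0).Nonempty := ⟨i0, by simp [hi0]⟩
  obtain ⟨i, hiS, hmax⟩ := Finset.exists_max_image _ tupleWt hS
  simp only [Finset.mem_filter, Finset.mem_univ, true_and] at hiS
  have h0 : (∑ i', g i' • cm i') i = 0 := by rw [hg]; rfl
  rw [Finset.sum_apply] at h0
  have hsingle : ∑ i', g i' • cm i' i = g i := by
    rw [Finset.sum_eq_single i]
    · rw [cm_self]; simp
    · intro i' _ hne'
      by_cases hg' : g i' = 0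
      · simp [hg']
      · have hle : tupleWt i' ≤ tupleWt i := hmax i' (by simp [hg'])
        have : ¬ preceq i i' := fun hp => hne' (eq_of_preceq_of_wt_le hp hle).symm
        simp [cm, this]
    · intro h; exact absurd (Finset.mem_univ i) h
  exact hiS (hsingle ▸ h0)

lemma cm_span_top (hn : 0 < n) :
    Submodule.span (ZMod 2) (Set.range (cm (n := n) (m := m))) = ⊤ := by
  haveI : Nonempty (Fin m → Fin n) := ⟨fun _ => ⟨0, hn⟩⟩
  apply cm_linearIndependent.span_eq_top_of_card_eq_finrank
  rw [Module.finrank_fintype_fun_eq_card]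

end Lemmas

section ConsLemmas
variable {n m : ℕ}

lemma zmod2_add_self (a : ZMod 2) : a + a = 0 := by fin_cases a <;> decide

lemma preceq_cons {a b : Fin n} {x y : Fin m → Fin n} :
    preceq (Fin.cons a x) (Fin.cons b y) ↔ ((a.val ≠ 0 → a = b) ∧ preceq x y) := by
  constructor
  · intro h
    refine ⟨fun ha => by simpa using h 0 (by simpa using ha), fun s hs => ?_⟩
    simpa using h s.succ (by simpa using hs)
  · rintro ⟨h1, h2⟩ s
    refine Fin.cases ?_ ?_ s
    · intro h0; simp only [Fin.cons_zero] at h0 ⊢; exact h1 h0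
    · intro t ht; simp only [Fin.cons_succ] at ht ⊢; exact h2 t ht

lemma tupleWt_cons (a : Fin n) (x : Fin m → Fin n) :
    tupleWt (Fin.cons a x) = (if a.val ≠ 0 then 1 else 0) + tupleWt x := by
  unfold tupleWt
  rw [Finset.card_filter, Finset.card_filter, Fin.sum_univ_succ]
  simp [Fin.cons_succ]

lemma sum_cons_index (f : (Fin (m+1) → Fin n) → ZMod 2) :
    ∑ i, f i = ∑ l : Fin n, ∑ j : Fin m → Fin n, f (Fin.cons l j) := by
  calc ∑ i, f i = ∑ p : Fin n × (Fin m → Fin n), f (Fin.cons p.1 p.2) :=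
        (Fintype.sum_equiv (Fin.consEquiv (fun _ => Fin n))
          (fun p => f (Fin.cons p.1 p.2)) f (fun p => rfl)).symm
    _ = ∑ l : Fin n, ∑ j : Fin m → Fin n, f (Fin.cons l j) :=
        Fintype.sum_prod_type (fun p : Fin n × (Fin m → Fin n) => f (Fin.cons p.1 p.2))

lemma sum_ite_or (b : Fin n) (S : ZMod 2) :
    ∑ l : Fin n, (if l.val = 0 ∨ l = b then S else 0) = if b.val = 0 then S else 0 := by
  haveI : NeZero n := ⟨b.pos.ne'⟩
  by_cases hb : b.val = 0
  · rw [if_pos hb]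
    have hcong : ∀ l : Fin n, (if l.val = 0 ∨ l = b then S else 0) = (if l = b then S else 0) := by
      intro l
      refine if_congr ⟨fun h => ?_, fun h => Or.inr h⟩ rfl rfl
      rcases h with h | h
      · exact Fin.ext (by rw [h, hb])
      · exact h
    rw [Finset.sum_congr rfl (fun l _ => hcong l)]
    simp [Finset.sum_ite_eq']
  · rw [if_neg hb]
    have hcong : ∀ l : Fin n,
        (if l.val = 0 ∨ l = b then S else 0)
          = (if l = (0 : Fin n) then S else 0) + (if l = b then S else 0) := by
      intro l
      by_cases h0 : l.val = 0
      · have hl0 : l = 0 := Fin.ext (by simpa using h0)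
        have hlb : l ≠ b := fun h => hb (h ▸ h0)
        rw [if_pos (Or.inl h0), if_pos hl0, if_neg hlb, add_zero]
      · have hl0 : l ≠ 0 := fun h => h0 (by simp [h])
        by_cases hlb : l = b
        · rw [if_pos (Or.inr hlb), if_neg hl0, if_pos hlb, zero_add]
        · rw [if_neg (by tauto), if_neg hl0, if_neg hlb, add_zero]
    rw [Finset.sum_congr rfl (fun l _ => hcong l), Finset.sum_add_distrib]
    simp [Finset.sum_ite_eq', zmod2_add_self]

lemma cm_cons_apply (l : Fin n) (i' : Fin (m+1) → Fin n) (j : Fin m → Fin n) :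
    cm i' (Fin.cons l j) = if (l.val = 0 ∨ l = i' 0) then cm (Fin.tail i') j else 0 := by
  have h1 : cm i' (Fin.cons l j)
      = if (l.val ≠ 0 → l = i' 0) ∧ preceq j (Fin.tail i') then 1 else 0 := by
    conv_lhs => rw [show cm i' (Fin.cons l j)
      = cm (Fin.cons (i' 0) (Fin.tail i')) (Fin.cons l j) by rw [Fin.cons_self_tail]]
    exact if_congr preceq_cons rfl rfl
  rw [h1]
  by_cases hA : l.val = 0 ∨ l = i' 0
  · rw [if_pos hA]
    have hA' : l.val ≠ 0 → l = i' 0 := or_iff_not_imp_left.mp hA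
    by_cases hp : preceq j (Fin.tail i')
    · rw [if_pos ⟨hA', hp⟩]; simp [cm, hp]
    · rw [if_neg (fun h => hp h.2)]; simp [cm, hp]
  · rw [if_neg hA]
    have hA' : ¬ (l.val ≠ 0 → l = i' 0) := fun h => hA (or_iff_not_imp_left.mpr h)
    simp [hA']

lemma blockAt_cm (l : Fin n) (i' : Fin (m+1) → Fin n) :
    blockAt n m l (cm i') = if (l.val = 0 ∨ l = i' 0) then cm (Fin.tail i') else 0 := by
  funext j
  rw [show blockAt n m l (cm i') j = cm i' (Fin.cons l j) from rfl, cm_cons_apply]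
  split <;> simp

lemma sum_blocks_cm (i' : Fin (m+1) → Fin n) :
    (fun j => ∑ l : Fin n, cm i' (Fin.cons l j))
      = if (i' 0).val = 0 then cm (Fin.tail i') else 0 := by
  funext j
  have : ∀ l : Fin n, cm i' (Fin.cons l j)
      = if (l.val = 0 ∨ l = i' 0) then cm (Fin.tail i') j else 0 := fun l => cm_cons_apply l i' j
  rw [Finset.sum_congr rfl (fun l _ => this l), sum_ite_or]
  split <;> simp

lemma sum_cm (i' : Fin m → Fin n) :
    ∑ i, cm i' i = if tupleWt i' = 0 then 1 else 0 := by
  induction m with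
  | zero =>
    have : tupleWt i' = 0 := by simp [tupleWt]
    rw [this]
    rw [Fintype.sum_eq_single (fun s => s.elim0)]
    · simp [cm, preceq]
    · intro x hx; exact absurd (funext fun s => s.elim0) hx
  | succ m ih =>
    rw [sum_cons_index (cm i')]
    have hterm : ∀ l : Fin n, ∑ j : Fin m → Fin n, cm i' (Fin.cons l j)
        = if (l.val = 0 ∨ l = i' 0) then (if tupleWt (Fin.tail i') = 0 then 1 else 0) else 0 := by
      intro l
      rw [Finset.sum_congr rfl (fun j _ => cm_cons_apply l i' j)]
      split
      · exact ih (Fin.tail i')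
      · simp
    rw [Finset.sum_congr rfl (fun l _ => hterm l), sum_ite_or]
    have hwt : tupleWt i' = (if (i' 0).val ≠ 0 then 1 else 0) + tupleWt (Fin.tail i') := by
      conv_lhs => rw [← Fin.cons_self_tail i', tupleWt_cons]
    by_cases h0 : (i' 0).val = 0
    · simp only [h0, if_pos]
      rw [hwt]; simp [h0]
    · simp only [h0, if_neg]
      rw [hwt]; simp [h0]

end ConsLemmas

section BerLemmas
variable {n : ℕ}

lemma Ber_m_zero (r : ℕ) : Ber n r 0 = {0} := by cases r <;> rfl

lemma zero_mem_Ber (r m : ℕ) : (0 : (Fin m → Fin n) → ZMod 2) ∈ Ber n r m := by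
  induction m generalizing r with
  | zero => rw [Ber_m_zero]; rfl
  | succ m ih =>
    cases r with
    | zero => show ∑ i, (0 : (Fin (m+1) → Fin n) → ZMod 2) i = 0; simp
    | succ r =>
      refine ⟨fun l => ?_, ?_⟩
      · show blockAt n m l 0 ∈ Ber n r m
        have h : blockAt n m l (0 : (Fin (m+1) → Fin n) → ZMod 2) = 0 := rfl
        rw [h]; exact ih r
      · have h : (fun j => ∑ l : Fin n, (0 : (Fin (m+1) → Fin n) → ZMod 2) (Fin.cons l j)) = 0 := by
          funext j; simp
        rw [h]; exact ih (r+1)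

lemma cm_mem_Ber (m : ℕ) : ∀ (r : ℕ) (i' : Fin m → Fin n),
    r + 1 ≤ tupleWt i' → cm i' ∈ Ber n r m := by
  induction m with
  | zero =>
    intro r i' h
    exfalso
    have h0 : tupleWt i' = 0 := by simp [tupleWt]
    omega
  | succ m ih =>
    intro r i' hwt
    have hwt_cons : tupleWt i' = (if (i' 0).val ≠ 0 then 1 else 0) + tupleWt (Fin.tail i') := by
      conv_lhs => rw [← Fin.cons_self_tail i', tupleWt_cons]
    have htail : tupleWt i' ≤ 1 + tupleWt (Fin.tail i') := by rw [hwt_cons]; split <;> omega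
    cases r with
    | zero =>
      show ∑ i, cm i' i = 0
      rw [sum_cm, if_neg (by omega)]
    | succ r =>
      refine ⟨fun l => ?_, ?_⟩
      · rw [blockAt_cm]
        split
        · exact ih r (Fin.tail i') (by omega)
        · exact zero_mem_Ber r m
      · rw [sum_blocks_cm]
        split_ifs with h0
        · have : tupleWt i' = tupleWt (Fin.tail i') := by rw [hwt_cons]; simp [h0]
          exact ih (r+1) (Fin.tail i') (by omega)
        · exact zero_mem_Ber (r+1) m

end BerLemmas

section TmapSec
variable {n m : ℕ}

def Tmap (n m : ℕ) (l : Fin n) :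
    ((Fin m → Fin n) → ZMod 2) →ₗ[ZMod 2] ((Fin (m+1) → Fin n) → ZMod 2) where
  toFun x := fun i => if (i 0).val = 0 ∨ i 0 = l then x (Fin.tail i) else 0
  map_add' x y := by
    funext i; by_cases h : (i 0).val = 0 ∨ i 0 = l <;> simp [h]
  map_smul' c x := by
    funext i; by_cases h : (i 0).val = 0 ∨ i 0 = l <;> simp [h]

lemma Tmap_cm (l : Fin n) (j : Fin m → Fin n) : Tmap n m l (cm j) = cm (Fin.cons l j) := by
  funext i
  show (if (i 0).val = 0 ∨ i 0 = l then cm j (Fin.tail i) else 0) = cm (Fin.cons l j) i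
  rw [show cm (Fin.cons l j) i = cm (Fin.cons l j) (Fin.cons (i 0) (Fin.tail i)) by
    rw [Fin.cons_self_tail], cm_cons_apply]
  simp

lemma decomp [NeZero n] (v : (Fin (m+1) → Fin n) → ZMod 2) :
    v = Tmap n m 0 (fun j => ∑ l : Fin n, v (Fin.cons l j))
        + ∑ l ∈ Finset.univ.erase (0 : Fin n), Tmap n m l (blockAt n m l v) := by
  funext i
  have hi : i = Fin.cons (i 0) (Fin.tail i) := (Fin.cons_self_tail i).symm
  rw [Pi.add_apply, Finset.sum_apply]
  by_cases h0 : (i 0).val = 0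
  · have hi0 : i 0 = 0 := Fin.ext (by simpa using h0)
    have h1 : Tmap n m 0 (fun j => ∑ l : Fin n, v (Fin.cons l j)) i
        = ∑ l : Fin n, v (Fin.cons l (Fin.tail i)) := by
      show (if (i 0).val = 0 ∨ i 0 = 0 then _ else 0) = _
      rw [if_pos (Or.inl h0)]
    have h2 : ∀ l : Fin n, Tmap n m l (blockAt n m l v) i = v (Fin.cons l (Fin.tail i)) := by
      intro l
      show (if (i 0).val = 0 ∨ i 0 = l then blockAt n m l v (Fin.tail i) else 0) = _
      rw [if_pos (Or.inl h0)]; rfl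
    rw [h1, Finset.sum_congr rfl (fun l _ => h2 l),
      ← Finset.add_sum_erase _ _ (Finset.mem_univ (0 : Fin n)), add_assoc,
      zmod2_add_self, add_zero]
    conv_lhs => rw [hi]
    rw [hi0]
  · have h1 : Tmap n m 0 (fun j => ∑ l : Fin n, v (Fin.cons l j)) i = 0 := by
      show (if (i 0).val = 0 ∨ i 0 = 0 then _ else 0) = 0
      rw [if_neg]
      rintro (h | h)
      · exact h0 h
      · exact h0 (by simp [h])
    have h2 : ∀ l : Fin n, Tmap n m l (blockAt n m l v) i
        = if i 0 = l then v (Fin.cons l (Fin.tail i)) else 0 := by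
      intro l
      show (if (i 0).val = 0 ∨ i 0 = l then blockAt n m l v (Fin.tail i) else 0) = _
      by_cases hl : i 0 = l
      · rw [if_pos (Or.inr hl), if_pos hl]; rfl
      · rw [if_neg (by tauto), if_neg hl]
    rw [h1, zero_add, Finset.sum_congr rfl (fun l _ => h2 l),
      Finset.sum_ite_eq (Finset.univ.erase (0 : Fin n)) (i 0)
        (fun l => v (Fin.cons l (Fin.tail i))),
      if_pos (Finset.mem_erase.mpr ⟨fun h => h0 (by simp [h]), Finset.mem_univ _⟩)]
    conv_lhs => rw [hi]

def recSub (n m : ℕ) (M1 M2 : Submodule (ZMod 2) ((Fin m → Fin n) → ZMod 2)) :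
    Submodule (ZMod 2) ((Fin (m+1) → Fin n) → ZMod 2) where
  carrier := {v | (∀ l : Fin n, blockAt n m l v ∈ M1) ∧
    (fun j => ∑ l : Fin n, v (Fin.cons l j)) ∈ M2}
  add_mem' := by
    rintro a b ⟨ha1, ha2⟩ ⟨hb1, hb2⟩
    refine ⟨fun l => ?_, ?_⟩
    · have h : blockAt n m l (a + b) = blockAt n m l a + blockAt n m l b := rfl
      rw [h]; exact M1.add_mem (ha1 l) (hb1 l)
    · have h : (fun j => ∑ l : Fin n, (a + b) (Fin.cons l j))
          = (fun j => ∑ l : Fin n, a (Fin.cons l j)) + (fun j => ∑ l : Fin n, b (Fin.cons l j)) := by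
        funext j; simp [Finset.sum_add_distrib]
      rw [h]; exact M2.add_mem ha2 hb2
  zero_mem' := by
    refine ⟨fun l => ?_, ?_⟩
    · show blockAt n m l 0 ∈ M1
      exact (show blockAt n m l (0 : (Fin (m+1) → Fin n) → ZMod 2) = 0 from rfl) ▸ M1.zero_mem
    · have h : (fun j => ∑ l : Fin n, (0 : (Fin (m+1) → Fin n) → ZMod 2) (Fin.cons l j)) = 0 := by
        funext j; simp
      rw [h]; exact M2.zero_mem
  smul_mem' := by
    rintro c v ⟨h1, h2⟩
    refine ⟨fun l => ?_, ?_⟩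
    · have h : blockAt n m l (c • v) = c • blockAt n m l v := rfl
      rw [h]; exact M1.smul_mem c (h1 l)
    · have h : (fun j => ∑ l : Fin n, (c • v) (Fin.cons l j))
          = c • (fun j => ∑ l : Fin n, v (Fin.cons l j)) := by
        funext j; simp [Finset.mul_sum]
      rw [h]; exact M2.smul_mem c h2

def sumLin (n m : ℕ) : ((Fin m → Fin n) → ZMod 2) →ₗ[ZMod 2] ZMod 2 where
  toFun c := ∑ i, c i
  map_add' a b := by simp [Finset.sum_add_distrib]
  map_smul' c a := by simp [Finset.mul_sum]

lemma tupleWt_eq_zero_iff {i' : Fin m → Fin n} : tupleWt i' = 0 ↔ ∀ s, (i' s).val = 0 := by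
  simp [tupleWt, Finset.card_eq_zero, Finset.filter_eq_empty_iff]

end TmapSec

lemma span_eq_Ber (n : ℕ) (hn : 0 < n) :
    ∀ m r : ℕ, (Submodule.span (ZMod 2) (cm '' {i' : Fin m → Fin n | r + 1 ≤ tupleWt i'}) :
      Set ((Fin m → Fin n) → ZMod 2)) = Ber n r m := by
  haveI : NeZero n := ⟨hn.ne'⟩
  intro m
  induction m with
  | zero =>
    intro r
    have he : {i' : Fin 0 → Fin n | r + 1 ≤ tupleWt i'} = ∅ := by
      ext i'; simp [tupleWt]
    rw [he, Set.image_empty, Submodule.span_empty, Ber_m_zero, Submodule.bot_coe]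
  | succ m ih =>
    intro r
    cases r with
    | zero =>
      apply subset_antisymm
      · have hle : Submodule.span (ZMod 2)
            (cm '' {i' : Fin (m+1) → Fin n | 0 + 1 ≤ tupleWt i'})
            ≤ LinearMap.ker (sumLin n (m+1)) := by
          rw [Submodule.span_le]
          rintro _ ⟨i', hi', rfl⟩
          show sumLin n (m+1) (cm i') = 0
          show ∑ i, cm i' i = 0
          rw [sum_cm, if_neg (by simp only [Set.mem_setOf_eq] at hi'; omega)]
        intro x hx
        exact hle hx
      · intro c hc
        have hc' : ∑ i, c i = 0 := hc
        have hmem : c ∈ Submodule.span (ZMod 2)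
            (Set.range (cm (n := n) (m := m+1))) := by
          rw [cm_span_top hn]; trivial
        obtain ⟨a, ha⟩ := (Submodule.mem_span_range_iff_exists_fun (ZMod 2)).mp hmem
        set z : Fin (m+1) → Fin n := fun _ => 0 with hz
        have hwtz : tupleWt z = 0 := tupleWt_eq_zero_iff.mpr (fun s => by simp [hz])
        have hzeq : ∀ i' : Fin (m+1) → Fin n, tupleWt i' = 0 → i' = z := by
          intro i' h
          funext s
          exact Fin.ext (by rw [tupleWt_eq_zero_iff.mp h s]; simp [hz])
        have key : ∀ i' : Fin (m+1) → Fin n,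
            ∑ i, a i' • cm i' i = if i' = z then a i' else 0 := by
          intro i'
          rw [← Finset.smul_sum, sum_cm, smul_eq_mul]
          by_cases h : tupleWt i' = 0
          · rw [if_pos h, if_pos (hzeq i' h), mul_one]
          · rw [if_neg h, if_neg (fun he => h (by rw [he]; exact hwtz)), mul_zero]
        have haz : a z = 0 := by
          have h2 : ∑ i, (∑ i', a i' • cm i') i = 0 := by rw [ha]; exact hc'
          simp only [Finset.sum_apply] at h2
          rw [Finset.sum_comm] at h2
          simp only [Pi.smul_apply] at h2
          rw [Finset.sum_congr rfl (fun i' _ => key i')] at h2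
          rwa [Finset.sum_ite_eq' Finset.univ z a, if_pos (Finset.mem_univ z)] at h2
        have hsplit : c = ∑ i' ∈ Finset.univ.erase z, a i' • cm i' := by
          rw [← ha, ← Finset.add_sum_erase _ _ (Finset.mem_univ z), haz, zero_smul, zero_add]
        rw [hsplit]
        apply SetLike.mem_coe.mpr
        apply Submodule.sum_mem
        intro i' hi'
        apply Submodule.smul_mem
        apply Submodule.subset_span
        refine ⟨i', ?_, rfl⟩
        have hne : i' ≠ z := (Finset.mem_erase.mp hi').1
        have : tupleWt i' ≠ 0 := fun h => hne (hzeq i' h)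
        simp only [Set.mem_setOf_eq]; omega
    | succ r =>
      have hB1 := ih r
      have hB2 := ih (r+1)
      set S1 := Submodule.span (ZMod 2) (cm '' {j : Fin m → Fin n | r + 1 ≤ tupleWt j}) with hS1
      set S2 := Submodule.span (ZMod 2) (cm '' {j : Fin m → Fin n | r + 1 + 1 ≤ tupleWt j}) with hS2
      have e1 : ∀ x, x ∈ Ber n r m ↔ x ∈ S1 := fun x => by rw [← hB1]; exact Iff.rfl
      have e2 : ∀ x, x ∈ Ber n (r+1) m ↔ x ∈ S2 := fun x => by rw [← hB2]; exact Iff.rfl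
      have hBer : Ber n (r+1) (m+1) = ↑(recSub n m S1 S2) := by
        ext v
        exact ⟨fun h => ⟨fun l => (e1 _).mp (h.1 l), (e2 _).mp h.2⟩,
               fun h => ⟨fun l => (e1 _).mpr (h.1 l), (e2 _).mpr h.2⟩⟩
      rw [hBer, ← SetLike.coe_set_eq.mpr (?_ : _ = recSub n m S1 S2)]
      apply le_antisymm
      · rw [Submodule.span_le]
        rintro _ ⟨i', hi', rfl⟩
        rw [show (↑(recSub n m S1 S2) : Set ((Fin (m+1) → Fin n) → ZMod 2))
          = Ber n (r+1) (m+1) from hBer.symm]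
        exact cm_mem_Ber (m+1) (r+1) i' hi'
      · rintro v ⟨h1, h2⟩
        rw [decomp v]
        apply Submodule.add_mem
        · have hs : (fun j => ∑ l : Fin n, v (Fin.cons l j)) ∈ S2 := h2
          have hmap := Submodule.mem_map_of_mem (f := Tmap n m 0) hs
          rw [hS2, Submodule.map_span] at hmap
          refine Submodule.span_mono ?_ hmap
          rintro _ ⟨_, ⟨j, hj, rfl⟩, rfl⟩
          refine ⟨Fin.cons (0 : Fin n) j, ?_, (Tmap_cm 0 j).symm⟩
          simp only [Set.mem_setOf_eq, tupleWt_cons] at hj ⊢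
          simpa using hj
        · apply Submodule.sum_mem
          intro l hl
          have hb : blockAt n m l v ∈ S1 := h1 l
          have hmap := Submodule.mem_map_of_mem (f := Tmap n m l) hb
          rw [hS1, Submodule.map_span] at hmap
          refine Submodule.span_mono ?_ hmap
          rintro _ ⟨_, ⟨j, hj, rfl⟩, rfl⟩
          refine ⟨Fin.cons l j, ?_, (Tmap_cm l j).symm⟩
          have hl0 : l ≠ 0 := (Finset.mem_erase.mp hl).1
          have hlv : l.val ≠ 0 := fun h => hl0 (Fin.ext (by simpa using h))
          simp only [Set.mem_setOf_eq, tupleWt_cons, if_pos hlv] at hj ⊢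
          omega


/-- `{c_m(i') : r+1 ≤ wt(i') ≤ m}` is a basis of `Ber_n^r(m)`, for `m ≥ 1`
and `0 ≤ r ≤ m-1`. -/
theorem stmt8 (n m r : ℕ) (hn : 2 ≤ n) (hm : 1 ≤ m) (hr : r < m) :
    LinearIndependent (ZMod 2)
      (fun i' : {i' : Fin m → Fin n // r + 1 ≤ tupleWt i'} => cm i'.1) ∧
    (Submodule.span (ZMod 2)
        (Set.range (fun i' : {i' : Fin m → Fin n // r + 1 ≤ tupleWt i'} => cm i'.1)) :
      Set ((Fin m → Fin n) → ZMod 2)) = Ber n r m := by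
  have hn0 : 0 < n := by omega
  haveI : NeZero n := ⟨hn0.ne'⟩
  constructor
  · exact cm_linearIndependent.comp Subtype.val Subtype.val_injective
  · have hrange : Set.range (fun i' : {i' : Fin m → Fin n // r + 1 ≤ tupleWt i'} => cm i'.1)
        = cm '' {i' : Fin m → Fin n | r + 1 ≤ tupleWt i'} := by
      ext x
      constructor
      · rintro ⟨⟨i', hi'⟩, rfl⟩; exact ⟨i', hi', rfl⟩
      · rintro ⟨i', hi', rfl⟩; exact ⟨⟨i', hi'⟩, rfl⟩
    rw [hrange]
    exact span_eq_Ber n hn0 m r
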